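/- arXiv:0812.2928 — 6 statements merged into one kernel-verified Lean document; each statement's English description precedes it below -/
import Mathlib

section
/- Let A and B be C*-algebras and let f : A → B be a mapping such that ‖f((b−a)/3) + f((a−3c)/3) + f((3a+3c−b)/3)‖ ≤ ‖f(a)‖ for all a, b, c ∈ A. Then f is additive, i.e. f(x+y) = f(x) + f(y) for all x, y ∈ A. -/
/-- If `f : A → B` between C*-algebras satisfies
`‖f((b−a)/3) + f((a−3c)/3) + f((3a+3c−b)/3)‖ ≤ ‖f(a)‖` for all `a b c`, then `f` is additive. -/
theorem stmt_0
    {A B : Type*}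
    [NormedRing A] [StarRing A] [CStarRing A] [NormedAlgebra ℂ A] [StarModule ℂ A]
    [CompleteSpace A]
    [NormedRing B] [StarRing B] [CStarRing B] [NormedAlgebra ℂ B] [StarModule ℂ B]
    [CompleteSpace B]
    (f : A → B)
    (hf : ∀ a b c : A,
      ‖f ((3:ℂ)⁻¹ • (b - a)) + f ((3:ℂ)⁻¹ • (a - (3:ℂ) • c)) +
        f ((3:ℂ)⁻¹ • ((3:ℂ) • a + (3:ℂ) • c - b))‖ ≤ ‖f a‖) :
    ∀ x y : A, f (x + y) = f x + f y := by
  have h0 : f 0 = 0 := by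
    have h := hf 0 0 0
    simp only [sub_zero, zero_sub, smul_zero, sub_self, add_zero, neg_zero] at h
    have h3 : ‖f 0 + f 0 + f 0‖ = 3 * ‖f 0‖ := by
      have he : f 0 + f 0 + f 0 = (3 : ℂ) • f 0 := by
        module
      rw [he, norm_smul]
      norm_num
    rw [h3] at h
    have : ‖f 0‖ = 0 := by nlinarith [norm_nonneg (f 0)]
    simpa using norm_eq_zero.mp this
  have key : ∀ b c : A, f ((3:ℂ)⁻¹ • b) + f (-c) + f (c - (3:ℂ)⁻¹ • b) = 0 := by
    intro b c
    have h := hf 0 b c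
    rw [h0, norm_zero] at h
    have harg1 : (3:ℂ)⁻¹ • (b - 0) = (3:ℂ)⁻¹ • b := by rw [sub_zero]
    have harg2 : (3:ℂ)⁻¹ • ((0:A) - (3:ℂ) • c) = -c := by
      rw [zero_sub, smul_neg, smul_smul]; norm_num
    have harg3 : (3:ℂ)⁻¹ • ((3:ℂ) • (0:A) + (3:ℂ) • c - b) = c - (3:ℂ)⁻¹ • b := by
      rw [smul_zero, zero_add, smul_sub, smul_smul]; norm_num
    rw [harg1, harg2, harg3] at h
    exact norm_le_zero_iff.mp h
  have hodd : ∀ c : A, f (-c) = -f c := by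
    intro c
    have h := key 0 c
    rw [smul_zero, h0, sub_zero, zero_add] at h
    exact eq_neg_of_add_eq_zero_left h
  intro x y
  have h := key ((3:ℂ) • x) (x + y)
  rw [smul_smul, hodd] at h
  have hx : ((3:ℂ)⁻¹ * 3) • x = x := by norm_num
  rw [hx, add_sub_cancel_left] at h
  apply eq_of_sub_eq_zero
  rw [← neg_eq_zero, ← h]
  abel
end

section
/- Let A and B be C*-algebras and let f : A → B be an odd mapping (f(−a) = −f(a) for all a ∈ A) for which there exists a function φ : A × A × A → [0,∞) such that (i) Σ_{i=0}^{∞} 3^i φ(a/3^i, b/3^i, c/3^i) < ∞ for all a, b, c ∈ A, (ii) lim_{n→∞} 3^{2n} φ(a/3^n, b/3^n, c/3^n) = 0 for all a, b, c ∈ A, (iii) ‖f(a*) − f(a)*‖ ≤ φ(a, a, a) for all a ∈ A, and (iv) ‖f((μb−a)/3) + f((a−3c)/3) + μ·f((3a−b)/3 + c) − f(a) + f(c²) − f(c)²‖ ≤ φ(a, b, c) for all a, b, c ∈ A and all μ ∈ 𝕋¹. Then there exists a unique Jordan *-homomorphism h : A → B such that ‖h(a) − f(a)‖ ≤ Σ_{i=0}^{∞}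 3^i φ(a/3^i, 2a/3^i, 0) for all a ∈ A. -/
/-!
Hyers' direct method. With `ψ x = φ(x, 2x, 0)`, inequality (iv) at `μ = 1, b = 2a, c = 0` reads
`‖3 f(x/3) - f x‖ ≤ ψ x`, so by (i) the sequence `3ⁿ f(x/3ⁿ)` is Cauchy; its limit `h` is within
`∑ 3ⁱ ψ(x/3ⁱ)` of `f`. Rescaling (iv) at `c = 0` by `3ⁿ`, the limit satisfies
`h((μb - a)/3) + h(a/3) + μ h((3a - b)/3) = h a` exactly, which forces additivity and
`h(μx) = μ h(x)` for `|μ| = 1`, hence `ℂ`-linearity, as every complex number is a natural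
multiple of a sum of two unimodular ones. Rescaling (iv) at `a = b = 0` by `9ⁿ` (using (ii)) and
(iii) by `3ⁿ` gives `h(c²) = h(c)²` and `h(a*) = h(a)*`. Two linear maps within that bound of
`f` differ at `a = 3ⁿ (a/3ⁿ)` by at most twice the `n`-th tail of the series, hence agree.
-/

open Filter Topology

theorem eq_zero_of_tendsto_of_norm_le {F : Type*} [NormedAddCommGroup F] {G : ℕ → F} {L : F}
    {ε : ℕ → ℝ} (hG : Tendsto G atTop (𝓝 L)) (hle : ∀ n, ‖G n‖ ≤ ε n)
    (hε : Tendsto ε atTop (𝓝 0)) : L = 0 :=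
  tendsto_nhds_unique hG (squeeze_zero_norm hle hε)

theorem Complex.exists_norm_eq_one_add_of_norm_le_two {w : ℂ} (hw : ‖w‖ ≤ 2) :
    ∃ μ₁ μ₂ : ℂ, ‖μ₁‖ = 1 ∧ ‖μ₂‖ = 1 ∧ w = μ₁ + μ₂ := by
  set u := exp (w.arg * I)
  set s := ‖w‖ / 2
  set t := √(1 - s ^ 2)
  have hs : s ^ 2 ≤ 1 := pow_le_one₀ (by positivity) (by simp only [s]; linarith)
  have hst : s ^ 2 + t ^ 2 = 1 := by rw [Real.sq_sqrt (by linarith)]; ring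
  have hu : ‖u‖ = 1 := norm_exp_ofReal_mul_I _
  refine ⟨u * (s + t * I), u * (s - t * I), ?_, ?_, ?_⟩
  · rw [norm_mul, hu, norm_add_mul_I, hst, Real.sqrt_one, one_mul]
  · rw [norm_mul, hu, sub_eq_add_neg, ← neg_mul, ← ofReal_neg, norm_add_mul_I, neg_sq, hst,
      Real.sqrt_one, one_mul]
  · conv_lhs => rw [← norm_mul_exp_arg_mul_I w]
    simp only [s]
    push_cast
    ring

theorem isLinearMap_of_map_add_of_map_unit_smul {E F : Type*} [AddCommGroup E] [Module ℂ E]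
    [AddCommGroup F] [Module ℂ F] {h : E → F} (hadd : ∀ x y, h (x + y) = h x + h y)
    (hunit : ∀ μ : ℂ, ‖μ‖ = 1 → ∀ x, h (μ • x) = μ • h x) : IsLinearMap ℂ h := by
  refine ⟨hadd, fun z x ↦ ?_⟩
  let hₐ : E →+ F := AddMonoidHom.mk' h hadd
  obtain ⟨n, hn⟩ := exists_nat_gt (‖z‖ / 2)
  have hn_pos : (0 : ℝ) < n := lt_of_le_of_lt (by positivity) hn
  have hn0 : (n : ℂ) ≠ 0 := by exact_mod_cast hn_pos.ne'
  have hw : ‖z / n‖ ≤ 2 := by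
    rw [norm_div, Complex.norm_natCast, div_le_iff₀ hn_pos]
    linarith
  obtain ⟨μ₁, μ₂, hμ₁, hμ₂, hμ⟩ := Complex.exists_norm_eq_one_add_of_norm_le_two hw
  have hz : z = n * (μ₁ + μ₂) := by rw [← hμ, mul_div_cancel₀ _ hn0]
  calc h (z • x) = n • (μ₁ • h x + μ₂ • h x) := by
        rw [hz, mul_smul, Nat.cast_smul_eq_nsmul, add_smul, ← hunit μ₁ hμ₁, ← hunit μ₂ hμ₂,
          ← hadd]
        exact map_nsmul hₐ n _
    _ = z • h x := by rw [hz, mul_smul, add_smul, Nat.cast_smul_eq_nsmul]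

section HyersSequence

variable {𝕜 E F : Type*} [NormedField 𝕜] [AddCommGroup E] [Module 𝕜 E]
  [NormedAddCommGroup F] [NormedSpace 𝕜 F] {r : 𝕜} {f : E → F} {ψ : E → ℝ}

def hyersSeq (r : 𝕜) (f : E → F) (n : ℕ) (x : E) : F := r ^ n • f ((r ^ n)⁻¹ • x)

theorem hyersSeq_zero : hyersSeq r f 0 = f := by
  ext x
  simp [hyersSeq]

theorem hyersSeq_succ_sub (n : ℕ) (x : E) :
    hyersSeq r f (n + 1) x - hyersSeq r f n x
      = r ^ n • (r • f (r⁻¹ • (r ^ n)⁻¹ • x) - f ((r ^ n)⁻¹ • x)) := by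
  simp only [hyersSeq, pow_succ, mul_inv, mul_smul, smul_sub]
  rw [smul_comm (r ^ n)⁻¹ r⁻¹]

theorem dist_hyersSeq_succ_le (hψ : ∀ x, ‖r • f (r⁻¹ • x) - f x‖ ≤ ψ x) (x : E) (n : ℕ) :
    dist (hyersSeq r f n x) (hyersSeq r f (n + 1) x) ≤ ‖r‖ ^ n * ψ ((r ^ n)⁻¹ • x) := by
  rw [dist_comm, dist_eq_norm, hyersSeq_succ_sub, norm_smul, norm_pow]
  gcongr
  exact hψ _

theorem cauchySeq_hyersSeq (hψ : ∀ x, ‖r • f (r⁻¹ • x) - f x‖ ≤ ψ x) {x : E}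
    (hs : Summable fun n ↦ ‖r‖ ^ n * ψ ((r ^ n)⁻¹ • x)) :
    CauchySeq fun n ↦ hyersSeq r f n x :=
  cauchySeq_of_dist_le_of_summable _ (dist_hyersSeq_succ_le hψ x) hs

theorem norm_sub_le_tsum_of_tendsto_hyersSeq (hψ : ∀ x, ‖r • f (r⁻¹ • x) - f x‖ ≤ ψ x)
    {x : E} (hs : Summable fun n ↦ ‖r‖ ^ n * ψ ((r ^ n)⁻¹ • x)) {L : F}
    (hL : Tendsto (fun n ↦ hyersSeq r f n x) atTop (𝓝 L)) :
    ‖L - f x‖ ≤ ∑' n, ‖r‖ ^ n * ψ ((r ^ n)⁻¹ • x) := by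
  simpa only [hyersSeq_zero, dist_eq_norm'] using
    dist_le_tsum_of_dist_le_of_tendsto₀ _ (dist_hyersSeq_succ_le hψ x) hs hL

theorem IsLinearMap.eq_of_norm_sub_le_tsum {h h' : E → F} (hh : IsLinearMap 𝕜 h)
    (hh' : IsLinearMap 𝕜 h') (hr : r ≠ 0)
    (hb : ∀ x, ‖h x - f x‖ ≤ ∑' n, ‖r‖ ^ n * ψ ((r ^ n)⁻¹ • x))
    (hb' : ∀ x, ‖h' x - f x‖ ≤ ∑' n, ‖r‖ ^ n * ψ ((r ^ n)⁻¹ • x)) : h = h' := by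
  funext a
  set g : ℕ → ℝ := fun i ↦ ‖r‖ ^ i * ψ ((r ^ i)⁻¹ • a)
  have htail : ∀ n x, x = (r ^ n)⁻¹ • a →
      ‖r‖ ^ n * ∑' i, ‖r‖ ^ i * ψ ((r ^ i)⁻¹ • x) = ∑' i, g (i + n) := by
    rintro n x rfl
    rw [← tsum_mul_left]
    refine tsum_congr fun i ↦ ?_
    simp only [g, pow_add, mul_inv, mul_smul, smul_comm (r ^ i)⁻¹ (r ^ n)⁻¹]
    ring
  have hle : ∀ n, ‖h a - h' a‖ ≤ 2 * ∑' i, g (i + n) := by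
    intro n
    set x := (r ^ n)⁻¹ • a with hx
    have hrn : r ^ n ≠ 0 := pow_ne_zero n hr
    have ha : a = r ^ n • x := (smul_inv_smul₀ hrn a).symm
    calc ‖h a - h' a‖ = ‖r‖ ^ n * ‖(h x - f x) - (h' x - f x)‖ := by
          rw [ha, hh.map_smul, hh'.map_smul, ← smul_sub, norm_smul, norm_pow,
            sub_sub_sub_cancel_right]
      _ ≤ ‖r‖ ^ n * (‖h x - f x‖ + ‖h' x - f x‖) := by gcongr; exact norm_sub_le _ _
      _ ≤ ‖r‖ ^ n * (2 * ∑' i, ‖r‖ ^ i * ψ ((r ^ i)⁻¹ • x)) := by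
          gcongr; linarith [hb x, hb' x]
      _ = 2 * ∑' i, g (i + n) := by rw [mul_left_comm, htail n x hx]
  have hlim : Tendsto (fun n ↦ 2 * ∑' i, g (i + n)) atTop (𝓝 0) := by
    simpa using (tendsto_sum_nat_add g).const_mul 2
  exact sub_eq_zero.mp (norm_le_zero_iff.mp (ge_of_tendsto' hlim hle))

end HyersSequence

section Square

variable {𝕜 E F : Type*} [NormedField 𝕜] [Ring E] [Algebra 𝕜 E] [NormedRing F]
  [NormedAlgebra 𝕜 F]

theorem map_sq_of_tendsto_hyersSeq {r : 𝕜} {f h : E → F}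
    (hh : ∀ x, Tendsto (fun n ↦ hyersSeq r f n x) atTop (𝓝 (h x))) {χ : E → ℝ}
    (hχ : ∀ c, ‖f (c ^ 2) - f c ^ 2‖ ≤ χ c)
    (hlim : ∀ c, Tendsto (fun n ↦ ‖r‖ ^ (2 * n) * χ ((r ^ n)⁻¹ • c)) atTop (𝓝 0)) (c : E) :
    h (c ^ 2) = h c ^ 2 := by
  have hdefect : ∀ n, hyersSeq r f (2 * n) (c ^ 2) - hyersSeq r f n c ^ 2
      = r ^ (2 * n) • (f (((r ^ n)⁻¹ • c) ^ 2) - f ((r ^ n)⁻¹ • c) ^ 2) := by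
    intro n
    simp only [hyersSeq, smul_pow, smul_sub, inv_pow, ← pow_mul, mul_comm n 2]
  have hsub : Tendsto (fun n ↦ 2 * n) atTop atTop :=
    tendsto_id.const_mul_atTop' two_pos
  refine sub_eq_zero.mp (eq_zero_of_tendsto_of_norm_le
    (((hh (c ^ 2)).comp hsub).sub ((hh c).pow 2)) (fun n ↦ ?_) (hlim c))
  simp only [Function.comp_apply, hdefect, norm_smul, norm_pow]
  gcongr
  exact hχ _

end Square

section Star

variable {𝕜 E F : Type*} [NormedField 𝕜] [StarRing 𝕜] [AddCommGroup E] [Module 𝕜 E]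
  [StarAddMonoid E] [StarModule 𝕜 E] [NormedAddCommGroup F] [NormedSpace 𝕜 F] [StarAddMonoid F]
  [StarModule 𝕜 F] [ContinuousStar F]

theorem map_star_of_tendsto_hyersSeq {r : 𝕜} (hr : IsSelfAdjoint r) {f h : E → F}
    (hh : ∀ x, Tendsto (fun n ↦ hyersSeq r f n x) atTop (𝓝 (h x))) {χ : E → ℝ}
    (hχ : ∀ a, ‖f (star a) - star (f a)‖ ≤ χ a)
    (hlim : ∀ a, Tendsto (fun n ↦ ‖r‖ ^ n * χ ((r ^ n)⁻¹ • a)) atTop (𝓝 0)) (a : E) :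
    h (star a) = star (h a) := by
  have hdefect : ∀ n, hyersSeq r f n (star a) - star (hyersSeq r f n a)
      = r ^ n • (f (star ((r ^ n)⁻¹ • a)) - star (f ((r ^ n)⁻¹ • a))) := by
    intro n
    simp only [hyersSeq, star_smul, star_inv₀, (hr.pow n).star_eq, smul_sub]
  refine sub_eq_zero.mp (eq_zero_of_tendsto_of_norm_le
    ((hh (star a)).sub (hh a).star) (fun n ↦ ?_) (hlim a))
  rw [hdefect, norm_smul, norm_pow]
  gcongr
  exact hχ _

end Star

section CauchyJensen

variable {E F : Type*} [AddCommGroup E] [Module ℂ E]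

/-- The left side of the paper's inequality (iv) at `c = 0`. -/
noncomputable def cauchyJensenDefect [AddCommGroup F] [Module ℂ F] (f : E → F) (μ : ℂ) (a b : E) :
    F :=
  f ((3 : ℂ)⁻¹ • (μ • b - a)) + f ((3 : ℂ)⁻¹ • a) + μ • f ((3 : ℂ)⁻¹ • ((3 : ℂ) • a - b)) - f a

theorem isLinearMap_of_cauchyJensenDefect_eq_zero [AddCommGroup F] [Module ℂ F] {h : E → F}
    (hE : ∀ μ : ℂ, ‖μ‖ = 1 → ∀ a b, cauchyJensenDefect h μ a b = 0) : IsLinearMap ℂ h := by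
  have eval : ∀ {μ : ℂ} (a b : E) {u v w : E}, ‖μ‖ = 1 → (3 : ℂ)⁻¹ • (μ • b - a) = u →
      (3 : ℂ)⁻¹ • a = v → (3 : ℂ)⁻¹ • ((3 : ℂ) • a - b) = w → h u + h v + μ • h w = h a := by
    rintro μ a b u v w hμ rfl rfl rfl
    exact sub_eq_zero.mp (hE μ hμ a b)
  have h0 : h 0 = 0 := by
    have e : h 0 + h 0 + (1 : ℂ) • h 0 = h 0 :=
      eval 0 0 norm_one (by module) (by module) (by module)
    linear_combination (norm := module) (2⁻¹ : ℂ) • e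
  have hunit : ∀ μ : ℂ, ‖μ‖ = 1 → ∀ x, h (μ • x) + μ • h (-x) = 0 := by
    intro μ hμ x
    have e : h (μ • x) + h 0 + μ • h (-x) = h 0 :=
      eval 0 ((3 : ℂ) • x) hμ (by module) (by module) (by module)
    linear_combination (norm := module) e
  have hadd : ∀ x y, h (x + y) = h x + h y := by
    intro x y
    have e₁ : h x + h ((2 : ℂ)⁻¹ • (x + y)) + (1 : ℂ) • h y = h ((3 / 2 : ℂ) • (x + y)) :=
      eval _ ((3 / 2 : ℂ) • (x + y) + (3 : ℂ) • x) norm_one (by module) (by module) (by module)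
    have e₂ : h 0 + h ((2 : ℂ)⁻¹ • (x + y)) + (1 : ℂ) • h (x + y) = h ((3 / 2 : ℂ) • (x + y)) :=
      eval _ ((3 / 2 : ℂ) • (x + y)) norm_one (by module) (by module) (by module)
    linear_combination (norm := module) e₂ - e₁ - h0
  refine isLinearMap_of_map_add_of_map_unit_smul hadd fun μ hμ x ↦ ?_
  have hneg := hunit 1 norm_one x
  rw [one_smul, one_smul] at hneg
  linear_combination (norm := module) hunit μ hμ x - μ • hneg

theorem cauchyJensenDefect_one_two_smul [AddCommGroup F] [Module ℂ F] (f : E → F) (x : E) :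
    cauchyJensenDefect f 1 x ((2 : ℂ) • x) = (3 : ℂ) • f ((3 : ℂ)⁻¹ • x) - f x := by
  have h₁ : (1 : ℂ) • (2 : ℂ) • x - x = x := by module
  have h₂ : (3 : ℂ) • x - (2 : ℂ) • x = x := by module
  rw [cauchyJensenDefect, h₁, h₂]
  module

variable [NormedAddCommGroup F] [NormedSpace ℂ F]

theorem cauchyJensenDefect_hyersSeq (r : ℂ) (f : E → F) (n : ℕ) (μ : ℂ) (a b : E) :
    cauchyJensenDefect (hyersSeq r f n) μ a b
      = r ^ n • cauchyJensenDefect f μ ((r ^ n)⁻¹ • a) ((r ^ n)⁻¹ • b) := by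
  have h₁ : (r ^ n)⁻¹ • (3 : ℂ)⁻¹ • (μ • b - a)
      = (3 : ℂ)⁻¹ • (μ • (r ^ n)⁻¹ • b - (r ^ n)⁻¹ • a) := by
    module
  have h₂ : (r ^ n)⁻¹ • (3 : ℂ)⁻¹ • a = (3 : ℂ)⁻¹ • (r ^ n)⁻¹ • a := smul_comm _ _ _
  have h₃ : (r ^ n)⁻¹ • (3 : ℂ)⁻¹ • ((3 : ℂ) • a - b)
      = (3 : ℂ)⁻¹ • ((3 : ℂ) • (r ^ n)⁻¹ • a - (r ^ n)⁻¹ • b) := by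
    module
  simp only [cauchyJensenDefect, hyersSeq]
  rw [h₁, h₂, h₃]
  module

theorem cauchyJensenDefect_eq_zero_of_tendsto_hyersSeq {r : ℂ} {f h : E → F}
    (hh : ∀ x, Tendsto (fun n ↦ hyersSeq r f n x) atTop (𝓝 (h x))) {μ : ℂ} {φ : E → E → ℝ}
    (hf : ∀ a b, ‖cauchyJensenDefect f μ a b‖ ≤ φ a b)
    (hφ : ∀ a b, Tendsto (fun n ↦ ‖r‖ ^ n * φ ((r ^ n)⁻¹ • a) ((r ^ n)⁻¹ • b)) atTop (𝓝 0))
    (a b : E) : cauchyJensenDefect h μ a b = 0 := by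
  refine eq_zero_of_tendsto_of_norm_le
    ((((hh _).add (hh _)).add ((hh _).const_smul μ)).sub (hh a)) (fun n ↦ ?_) (hφ a b)
  rw [← cauchyJensenDefect, cauchyJensenDefect_hyersSeq, norm_smul, norm_pow]
  gcongr
  exact hf _ _

end CauchyJensen

theorem stmt_4_general
    {A B : Type*}
    [NormedRing A] [StarRing A] [NormedAlgebra ℂ A] [StarModule ℂ A]
    [NormedRing B] [StarRing B] [CStarRing B] [NormedAlgebra ℂ B] [StarModule ℂ B]
    [CompleteSpace B]
    (f : A → B) (hodd : ∀ a : A, f (-a) = -f a)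
    (φ : A → A → A → ℝ)
    (hsum : ∀ a b c : A, Summable (fun i : ℕ =>
      (3:ℝ)^i * φ (((3:ℂ)^i)⁻¹ • a) (((3:ℂ)^i)⁻¹ • b) (((3:ℂ)^i)⁻¹ • c)))
    (hlim : ∀ a b c : A, Tendsto (fun n : ℕ =>
      (3:ℝ)^(2*n) * φ (((3:ℂ)^n)⁻¹ • a) (((3:ℂ)^n)⁻¹ • b) (((3:ℂ)^n)⁻¹ • c))
      atTop (nhds 0))
    (hstar : ∀ a : A, ‖f (star a) - star (f a)‖ ≤ φ a a a)
    (hineq : ∀ μ : ℂ, ‖μ‖ = 1 → ∀ a b c : A,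
      ‖f ((3:ℂ)⁻¹ • (μ • b - a)) + f ((3:ℂ)⁻¹ • (a - (3:ℂ) • c)) +
        μ • f ((3:ℂ)⁻¹ • ((3:ℂ) • a - b) + c) - f a + f (c ^ 2) - (f c) ^ 2‖
        ≤ φ a b c) :
    ∃! h : A → B,
      (IsLinearMap ℂ h ∧ (∀ a : A, h (a ^ 2) = (h a) ^ 2) ∧
        (∀ a : A, h (star a) = star (h a))) ∧
      ∀ a : A, ‖h a - f a‖ ≤
        ∑' i : ℕ, (3:ℝ)^i * φ (((3:ℂ)^i)⁻¹ • a) (((3:ℂ)^i)⁻¹ • ((2:ℂ) • a)) 0 := by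
  have h3 : ‖(3 : ℂ)‖ = 3 := by norm_num
  have hf0 : f 0 = 0 := by
    have e := hodd 0
    rw [neg_zero] at e
    linear_combination (norm := module) (2⁻¹ : ℂ) • e
  have hJensen : ∀ μ : ℂ, ‖μ‖ = 1 → ∀ a b, ‖cauchyJensenDefect f μ a b‖ ≤ φ a b 0 :=
    fun μ hμ a b ↦ by simpa [cauchyJensenDefect, hf0] using hineq μ hμ a b 0
  set ψ : A → ℝ := fun x ↦ φ x ((2 : ℂ) • x) 0
  have hψ : ∀ x, ‖(3 : ℂ) • f ((3 : ℂ)⁻¹ • x) - f x‖ ≤ ψ x := fun x ↦ by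
    simpa only [cauchyJensenDefect_one_two_smul] using hJensen 1 norm_one x ((2 : ℂ) • x)
  have hψsum : ∀ x, (fun n : ℕ ↦ ‖(3 : ℂ)‖ ^ n * ψ (((3 : ℂ) ^ n)⁻¹ • x))
      = fun n ↦ (3 : ℝ) ^ n * φ (((3 : ℂ) ^ n)⁻¹ • x) (((3 : ℂ) ^ n)⁻¹ • ((2 : ℂ) • x)) 0 :=
    fun x ↦ by simp only [ψ, h3, smul_comm (2 : ℂ)]
  have hs : ∀ x, Summable fun n : ℕ ↦ ‖(3 : ℂ)‖ ^ n * ψ (((3 : ℂ) ^ n)⁻¹ • x) := fun x ↦ by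
    simpa only [hψsum, smul_zero] using hsum x ((2 : ℂ) • x) 0
  choose h hh using fun x ↦ cauchySeq_tendsto_of_complete (cauchySeq_hyersSeq hψ (hs x))
  have hlin : IsLinearMap ℂ h :=
    isLinearMap_of_cauchyJensenDefect_eq_zero fun μ hμ ↦
      cauchyJensenDefect_eq_zero_of_tendsto_hyersSeq hh (hJensen μ hμ) fun a b ↦ by
        simpa [h3] using (hsum a b 0).tendsto_atTop_zero
  have hbound : ∀ a, ‖h a - f a‖ ≤ ∑' n : ℕ, ‖(3 : ℂ)‖ ^ n * ψ (((3 : ℂ) ^ n)⁻¹ • a) :=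
    fun a ↦ norm_sub_le_tsum_of_tendsto_hyersSeq hψ (hs a) (hh a)
  refine ⟨h, ⟨⟨hlin, ?_, ?_⟩, fun a ↦ hψsum a ▸ hbound a⟩, ?_⟩
  · refine map_sq_of_tendsto_hyersSeq hh (fun c ↦ ?_) fun c ↦ by simpa [h3] using hlim 0 0 c
    simpa [hodd, hf0] using hineq 1 norm_one 0 0 c
  · exact map_star_of_tendsto_hyersSeq (IsSelfAdjoint.ofNat 3) hh hstar fun a ↦ by
      simpa [h3] using (hsum a a a).tendsto_atTop_zero
  · rintro h' ⟨⟨hlin', -, -⟩, hbound'⟩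
    exact (hlin.eq_of_norm_sub_le_tsum hlin' three_ne_zero hbound
      fun a ↦ hψsum a ▸ hbound' a).symm

/-- Generalized Hyers–Ulam stability of Jordan *-homomorphisms (contraction direction). -/
theorem stmt_4
    {A B : Type*}
    [NormedRing A] [StarRing A] [CStarRing A] [NormedAlgebra ℂ A] [StarModule ℂ A]
    [CompleteSpace A]
    [NormedRing B] [StarRing B] [CStarRing B] [NormedAlgebra ℂ B] [StarModule ℂ B]
    [CompleteSpace B]
    (f : A → B) (hodd : ∀ a : A, f (-a) = -f a)
    (φ : A → A → A → ℝ) (hφ : ∀ a b c : A, 0 ≤ φ a b c)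
    (hsum : ∀ a b c : A, Summable (fun i : ℕ =>
      (3:ℝ)^i * φ (((3:ℂ)^i)⁻¹ • a) (((3:ℂ)^i)⁻¹ • b) (((3:ℂ)^i)⁻¹ • c)))
    (hlim : ∀ a b c : A, Tendsto (fun n : ℕ =>
      (3:ℝ)^(2*n) * φ (((3:ℂ)^n)⁻¹ • a) (((3:ℂ)^n)⁻¹ • b) (((3:ℂ)^n)⁻¹ • c))
      atTop (nhds 0))
    (hstar : ∀ a : A, ‖f (star a) - star (f a)‖ ≤ φ a a a)
    (hineq : ∀ μ : ℂ, ‖μ‖ = 1 → ∀ a b c : A,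
      ‖f ((3:ℂ)⁻¹ • (μ • b - a)) + f ((3:ℂ)⁻¹ • (a - (3:ℂ) • c)) +
        μ • f ((3:ℂ)⁻¹ • ((3:ℂ) • a - b) + c) - f a + f (c ^ 2) - (f c) ^ 2‖
        ≤ φ a b c) :
    ∃! h : A → B,
      (IsLinearMap ℂ h ∧ (∀ a : A, h (a ^ 2) = (h a) ^ 2) ∧
        (∀ a : A, h (star a) = star (h a))) ∧
      ∀ a : A, ‖h a - f a‖ ≤
        ∑' i : ℕ, (3:ℝ)^i * φ (((3:ℂ)^i)⁻¹ • a) (((3:ℂ)^i)⁻¹ • ((2:ℂ) • a)) 0 :=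
  stmt_4_general f hodd φ hsum hlim hstar hineq
end

section
/- Let A and B be C*-algebras and let f : A → B be a mapping such that ‖f((b−a)/3) + f((a−3c)/3) + f((3a+3c−b)/3)‖ ≤ ‖f(a)‖ for all a, b, c ∈ A. Then f(0) = 0, f(−c) = −f(c) for all c ∈ A, f(2c) = 2f(c) for all c ∈ A, and f(3c) = 3f(c) for all c ∈ A. -/
/-- First steps of Lemma 2.1: the functional inequality forces `f(0)=0`, oddness,
`f(2c)=2f(c)` and `f(3c)=3f(c)`. -/
theorem stmt_11
    {A B : Type*}
    [NormedRing A] [StarRing A] [CStarRing A] [NormedAlgebra ℂ A] [StarModule ℂ A]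
    [CompleteSpace A]
    [NormedRing B] [StarRing B] [CStarRing B] [NormedAlgebra ℂ B] [StarModule ℂ B]
    [CompleteSpace B]
    (f : A → B)
    (hf : ∀ a b c : A,
      ‖f ((3:ℂ)⁻¹ • (b - a)) + f ((3:ℂ)⁻¹ • (a - (3:ℂ) • c)) +
        f ((3:ℂ)⁻¹ • ((3:ℂ) • a + (3:ℂ) • c - b))‖ ≤ ‖f a‖) :
    f 0 = 0 ∧ (∀ c : A, f (-c) = -f c) ∧ (∀ c : A, f ((2:ℂ) • c) = (2:ℂ) • f c) ∧
      (∀ c : A, f ((3:ℂ) • c) = (3:ℂ) • f c) := by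
  have h0 : f 0 = 0 := by
    have h := hf 0 0 0
    simp only [sub_zero, zero_sub, smul_zero, sub_self, zero_add, neg_zero] at h
    have e : f 0 + f 0 + f 0 = (3:ℂ) • f 0 := by module
    rw [e, norm_smul] at h
    simp only [Complex.norm_ofNat] at h
    have : ‖f 0‖ = 0 := by nlinarith [norm_nonneg (f 0)]
    simpa using norm_eq_zero.mp this
  have key : ∀ x c : A, f x + f (-c) + f (c - x) = 0 := by
    intro x c
    have h := hf 0 ((3:ℂ) • x) c
    have e1 : (3:ℂ)⁻¹ • ((3:ℂ) • x - 0) = x := by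
      rw [sub_zero, smul_smul]; norm_num
    have e2 : (3:ℂ)⁻¹ • ((0:A) - (3:ℂ) • c) = -c := by
      rw [zero_sub, smul_neg, smul_smul]; norm_num
    have e3 : (3:ℂ)⁻¹ • ((3:ℂ) • (0:A) + (3:ℂ) • c - (3:ℂ) • x) = c - x := by
      rw [smul_zero, zero_add, ← smul_sub, smul_smul]; norm_num
    rw [e1, e2, e3, h0, norm_zero] at h
    exact norm_le_zero_iff.mp h
  have hodd : ∀ c : A, f (-c) = -f c := by
    intro c
    have h := key 0 c
    rw [h0, sub_zero, zero_add] at h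
    exact eq_neg_of_add_eq_zero_left h
  have hsub : ∀ x c : A, f (c - x) = f c - f x := by
    intro x c
    have h := key x c
    rw [hodd] at h
    have := eq_neg_of_add_eq_zero_right h
    rw [this]; abel
  have h2 : ∀ c : A, f ((2:ℂ) • c) = (2:ℂ) • f c := by
    intro c
    have e : (2:ℂ) • c = c - (-c) := by module
    rw [e, hsub, hodd, two_smul]; abel
  refine ⟨h0, hodd, h2, fun c => ?_⟩
  have e : (3:ℂ) • c = (2:ℂ) • c - (-c) := by module
  rw [e, hsub, hodd, h2]
  module
end

section
/- Let A and B be normed complex vector spaces, let f : A → B be a mapping, and let ε : A → [0,∞) be a function such that ‖3f(a/3) − f(a)‖ ≤ ε(a) for all a ∈ A. Then for every positive integer n and every a ∈ A one has ‖3^{−n} f(3^n a) − f(a)‖ ≤ Σ_{i=1}^{n} 3^{−i} ε(3^i a). -/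
section IteratedEstimate

variable {𝕜 A B : Type*} [NormedField 𝕜] [MulAction 𝕜 A]
  [SeminormedAddCommGroup B] [NormedSpace 𝕜 B] {c : 𝕜} {f : A → B} {ε : A → ℝ}

theorem norm_inv_smul_apply_smul_sub_le (hc : c ≠ 0)
    (h : ∀ a, ‖c • f (c⁻¹ • a) - f a‖ ≤ ε a) (a : A) :
    ‖c⁻¹ • f (c • a) - f a‖ ≤ ‖c‖⁻¹ * ε (c • a) := by
  have hrw : c⁻¹ • f (c • a) - f a = c⁻¹ • (f (c • a) - c • f a) := by
    rw [smul_sub, inv_smul_smul₀ hc]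
  have hca := h (c • a)
  rw [inv_smul_smul₀ hc, norm_sub_rev] at hca
  rw [hrw, norm_smul, norm_inv]
  gcongr

theorem norm_inv_pow_smul_apply_pow_smul_sub_le (hc : c ≠ 0)
    (h : ∀ a, ‖c • f (c⁻¹ • a) - f a‖ ≤ ε a) (n : ℕ) (a : A) :
    ‖(c ^ n)⁻¹ • f (c ^ n • a) - f a‖ ≤
      ∑ i ∈ Finset.Icc 1 n, (‖c‖ ^ i)⁻¹ * ε (c ^ i • a) := by
  induction n with
  | zero => simp
  | succ n ih =>
    set b := c ^ n • a
    have hsplit : (c ^ (n + 1))⁻¹ • f (c ^ (n + 1) • a) - f a =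
        (c ^ n)⁻¹ • (c⁻¹ • f (c • b) - f b) + ((c ^ n)⁻¹ • f b - f a) := by
      rw [smul_sub, smul_smul, smul_smul, ← mul_inv, ← pow_succ, pow_succ', mul_smul]
      abel
    calc ‖(c ^ (n + 1))⁻¹ • f (c ^ (n + 1) • a) - f a‖
        ≤ ‖c‖⁻¹ ^ n * ‖c⁻¹ • f (c • b) - f b‖ + ‖(c ^ n)⁻¹ • f b - f a‖ := by
          rw [hsplit, ← norm_inv, ← norm_pow, ← inv_pow, ← norm_smul]
          exact norm_add_le _ _
      _ ≤ ‖c‖⁻¹ ^ n * (‖c‖⁻¹ * ε (c • b)) +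
            ∑ i ∈ Finset.Icc 1 n, (‖c‖ ^ i)⁻¹ * ε (c ^ i • a) := by
          gcongr
          exact norm_inv_smul_apply_smul_sub_le hc h b
      _ = ∑ i ∈ Finset.Icc 1 (n + 1), (‖c‖ ^ i)⁻¹ * ε (c ^ i • a) := by
          rw [Finset.sum_Icc_succ_top (by omega), smul_smul, ← pow_succ']
          ring

end IteratedEstimate

theorem stmt_14_general
    {A B : Type*} [NormedAddCommGroup A] [NormedSpace ℂ A]
    [NormedAddCommGroup B] [NormedSpace ℂ B]
    (f : A → B) (ε : A → ℝ)
    (h : ∀ a : A, ‖(3:ℂ) • f ((3:ℂ)⁻¹ • a) - f a‖ ≤ ε a) :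
    ∀ n : ℕ, 0 < n → ∀ a : A,
      ‖((3:ℂ)^n)⁻¹ • f ((3:ℂ)^n • a) - f a‖ ≤
        ∑ i ∈ Finset.Icc 1 n, ((3:ℝ)^i)⁻¹ * ε ((3:ℂ)^i • a) := by
  intro n _ a
  simpa using norm_inv_pow_smul_apply_pow_smul_sub_le three_ne_zero h n a

/-- Iterated estimate: `‖3⁻ⁿ f(3ⁿ a) − f(a)‖ ≤ Σ_{i=1}^{n} 3⁻ⁱ ε(3ⁱ a)`. -/
theorem stmt_14
    {A B : Type*} [NormedAddCommGroup A] [NormedSpace ℂ A]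
    [NormedAddCommGroup B] [NormedSpace ℂ B]
    (f : A → B) (ε : A → ℝ) (hε : ∀ a : A, 0 ≤ ε a)
    (h : ∀ a : A, ‖(3:ℂ) • f ((3:ℂ)⁻¹ • a) - f a‖ ≤ ε a) :
    ∀ n : ℕ, 0 < n → ∀ a : A,
      ‖((3:ℂ)^n)⁻¹ • f ((3:ℂ)^n • a) - f a‖ ≤
        ∑ i ∈ Finset.Icc 1 n, ((3:ℝ)^i)⁻¹ * ε ((3:ℂ)^i • a) :=
  stmt_14_general f ε h
end

section
/- Let A be a normed complex vector space, let B be a complex Banach space, let f : A → B be a mapping, and let ε : A → [0,∞) be a function such that ‖3f(a/3) − f(a)‖ ≤ ε(a) for all a ∈ A and Σ_{i=0}^{∞} 3^i ε(a/3^i) < ∞ for all a ∈ A. Then for every a ∈ A the limit h(a) = lim_{n→∞} 3^n f(a/3^n) exists, and the resulting mapping h : A → B satisfies ‖h(a) − f(a)‖ ≤ Σ_{i=0}^{∞} 3^i ε(a/3^i) for all a ∈ A. -/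
open Filter

/-- Existence of the limit `h(a) = lim 3ⁿ f(a/3ⁿ)` and the stability estimate. -/
theorem stmt_15
    {A B : Type*} [NormedAddCommGroup A] [NormedSpace ℂ A]
    [NormedAddCommGroup B] [NormedSpace ℂ B] [CompleteSpace B]
    (f : A → B) (ε : A → ℝ) (hε : ∀ a : A, 0 ≤ ε a)
    (h : ∀ a : A, ‖(3:ℂ) • f ((3:ℂ)⁻¹ • a) - f a‖ ≤ ε a)
    (hsum : ∀ a : A, Summable (fun i : ℕ => (3:ℝ)^i * ε (((3:ℂ)^i)⁻¹ • a))) :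
    ∃ h' : A → B,
      (∀ a : A, Tendsto (fun n : ℕ => (3:ℂ)^n • f (((3:ℂ)^n)⁻¹ • a))
        atTop (nhds (h' a))) ∧
      ∀ a : A, ‖h' a - f a‖ ≤ ∑' i : ℕ, (3:ℝ)^i * ε (((3:ℂ)^i)⁻¹ • a) := by
  set g : A → ℕ → B := fun a n => (3:ℂ)^n • f (((3:ℂ)^n)⁻¹ • a) with hg
  have key : ∀ a (n : ℕ), dist (g a n) (g a (n+1)) ≤ (3:ℝ)^n * ε (((3:ℂ)^n)⁻¹ • a) := by
    intro a n
    have harg : (3:ℂ)⁻¹ • (((3:ℂ)^n)⁻¹ • a) = ((3:ℂ)^(n+1))⁻¹ • a := by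
      rw [smul_smul, ← mul_inv, mul_comm, ← pow_succ]
    have heq : g a n - g a (n+1)
        = -((3:ℂ)^n • ((3:ℂ) • f ((3:ℂ)⁻¹ • (((3:ℂ)^n)⁻¹ • a)) - f (((3:ℂ)^n)⁻¹ • a))) := by
      simp only [hg, harg]
      rw [smul_sub, smul_smul, ← pow_succ]
      abel
    rw [dist_eq_norm, heq, norm_neg, norm_smul]
    have h3 : ‖(3:ℂ)^n‖ = (3:ℝ)^n := by
      rw [norm_pow]; norm_num
    rw [h3]
    exact mul_le_mul_of_nonneg_left (h _) (by positivity)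
  have hc : ∀ a : A, ∃ b : B, Tendsto (g a) atTop (nhds b) := by
    intro a
    exact cauchySeq_tendsto_of_complete
      (cauchySeq_of_dist_le_of_summable _ (key a) (hsum a))
  choose h' hh' using hc
  refine ⟨h', hh', fun a => ?_⟩
  have h0 : g a 0 = f a := by simp [hg]
  have := dist_le_tsum_of_dist_le_of_tendsto₀ _ (key a) (hsum a) (hh' a)
  rwa [h0, dist_comm, dist_eq_norm] at this
end

section
/- Let A be a normed complex vector space, let B be a complex Banach space, let f : A → B be a mapping, and let ε : A → [0,∞) be a function such that ‖3f(a/3) − f(a)‖ ≤ ε(a) for all a ∈ A and Σ_{i=1}^{∞} 3^{−i} ε(3^i a) < ∞ for all a ∈ A. Then for every a ∈ A the limit h(a) = lim_{n→∞} 3^{−n} f(3^n a) exists, and the resulting mapping h : A → B satisfies ‖h(a) − f(a)‖ ≤ Σ_{i=1}^{∞} 3^{−i} ε(3^i a) for all a ∈ A. -/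
/-!
The rescaled maps `gₙ a = 3⁻ⁿ f(3ⁿ a)` satisfy
`‖gₙ₊₁ a - gₙ a‖ = 3⁻⁽ⁿ⁺¹⁾ ‖3 f(3ⁿ a) - f(3ⁿ⁺¹ a)‖ ≤ 3⁻⁽ⁿ⁺¹⁾ ε(3ⁿ⁺¹ a)`,
so `(gₙ a)` is Cauchy with summable steps; since `g₀ a = f a`, its limit lies within the sum
of the steps from `f a`.
-/

open Filter Topology

theorem exists_tendsto_dist_le_tsum {X : Type*} [PseudoMetricSpace X] [CompleteSpace X]
    (u : ℕ → X) (d : ℕ → ℝ) (hu : ∀ n, dist (u n) (u (n + 1)) ≤ d n) (hd : Summable d) :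
    ∃ x, Tendsto u atTop (𝓝 x) ∧ dist (u 0) x ≤ ∑' n, d n := by
  obtain ⟨x, hx⟩ := cauchySeq_tendsto_of_complete (cauchySeq_of_dist_le_of_summable d hu hd)
  exact ⟨x, hx, dist_le_tsum_of_dist_le_of_tendsto₀ d hu hd hx⟩

theorem norm_inv_pow_smul_comp_pow_smul_succ_sub
    {𝕜 A B : Type*} [NormedField 𝕜] [AddCommGroup A] [Module 𝕜 A]
    [SeminormedAddCommGroup B] [NormedSpace 𝕜 B]
    (c : 𝕜) (hc : c ≠ 0) (f : A → B) (a : A) (n : ℕ) :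
    ‖(c ^ (n + 1))⁻¹ • f (c ^ (n + 1) • a) - (c ^ n)⁻¹ • f (c ^ n • a)‖ =
      (‖c‖ ^ (n + 1))⁻¹ * ‖c • f (c⁻¹ • c ^ (n + 1) • a) - f (c ^ (n + 1) • a)‖ := by
  have hdown : c⁻¹ • c ^ (n + 1) • a = c ^ n • a := by
    rw [smul_smul, pow_succ', inv_mul_cancel_left₀ hc]
  have hscale : (c ^ n)⁻¹ = (c ^ (n + 1))⁻¹ * c := by
    rw [pow_succ, mul_inv, inv_mul_cancel_right₀ hc]
  rw [hdown, hscale, mul_smul, ← smul_sub, norm_smul, norm_inv, norm_pow, norm_sub_rev]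

theorem stmt_16_general
    {A B : Type*} [NormedAddCommGroup A] [NormedSpace ℂ A]
    [NormedAddCommGroup B] [NormedSpace ℂ B] [CompleteSpace B]
    (f : A → B) (ε : A → ℝ)
    (h : ∀ a : A, ‖(3:ℂ) • f ((3:ℂ)⁻¹ • a) - f a‖ ≤ ε a)
    (hsum : ∀ a : A, Summable (fun i : ℕ => ((3:ℝ)^(i+1))⁻¹ * ε ((3:ℂ)^(i+1) • a))) :
    ∃ h' : A → B,
      (∀ a : A, Tendsto (fun n : ℕ => ((3:ℂ)^n)⁻¹ • f ((3:ℂ)^n • a))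
        atTop (nhds (h' a))) ∧
      ∀ a : A, ‖h' a - f a‖ ≤ ∑' i : ℕ, ((3:ℝ)^(i+1))⁻¹ * ε ((3:ℂ)^(i+1) • a) := by
  have hstep : ∀ a n, dist (((3:ℂ) ^ n)⁻¹ • f ((3:ℂ) ^ n • a))
      (((3:ℂ) ^ (n + 1))⁻¹ • f ((3:ℂ) ^ (n + 1) • a)) ≤
        ((3:ℝ) ^ (n + 1))⁻¹ * ε ((3:ℂ) ^ (n + 1) • a) := fun a n => by
    rw [dist_comm, dist_eq_norm, norm_inv_pow_smul_comp_pow_smul_succ_sub (3:ℂ) three_ne_zero,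
      Complex.norm_ofNat]
    exact mul_le_mul_of_nonneg_left (h _) (by positivity)
  choose h' hlim hdist using fun a => exists_tendsto_dist_le_tsum _ _ (hstep a) (hsum a)
  refine ⟨h', hlim, fun a => ?_⟩
  simpa [dist_eq_norm, norm_sub_rev] using hdist a

/-- Existence of the limit `h(a) = lim 3⁻ⁿ f(3ⁿ a)` and the stability estimate. -/
theorem stmt_16
    {A B : Type*} [NormedAddCommGroup A] [NormedSpace ℂ A]
    [NormedAddCommGroup B] [NormedSpace ℂ B] [CompleteSpace B]
    (f : A → B) (ε : A → ℝ) (hε : ∀ a : A, 0 ≤ ε a)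
    (h : ∀ a : A, ‖(3:ℂ) • f ((3:ℂ)⁻¹ • a) - f a‖ ≤ ε a)
    (hsum : ∀ a : A, Summable (fun i : ℕ => ((3:ℝ)^(i+1))⁻¹ * ε ((3:ℂ)^(i+1) • a))) :
    ∃ h' : A → B,
      (∀ a : A, Tendsto (fun n : ℕ => ((3:ℂ)^n)⁻¹ • f ((3:ℂ)^n • a))
        atTop (nhds (h' a))) ∧
      ∀ a : A, ‖h' a - f a‖ ≤ ∑' i : ℕ, ((3:ℝ)^(i+1))⁻¹ * ε ((3:ℂ)^(i+1) • a) :=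
  stmt_16_general f ε h hsum
end
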